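/- In an intra-regular LA-semihypergroup H with pure left identity, a nonempty subset Q is a quasi hyperideal (H ∘ Q ∩ Q ∘ H ⊆ Q) if and only if H ∘ Q ∩ Q ∘ H = Q. Moreover, for any quasi hyperideal Q, H ∘ Q = Q ∘ H. -/

import Mathlib

/-!
In an LA-semihypergroup with pure left identity `e` the left invertive law lifts to subsets and
yields the medial, paramedial and left-commutative laws. For `t ∈ h ∘ a`, intra-regularity puts
`t` in `(x ∘ (t ∘ t)) ∘ y ⊆ (x ∘ ((h ∘ a) ∘ (h ∘ a))) ∘ y`, which these laws rearrange into
`a ∘ ((y ∘ (x ∘ (h ∘ h))) ∘ a)`; hence `H ∘ A ⊆ A ∘ H` for every subset `A`. Since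
`A ∘ H = (H ∘ A) ∘ e` and `H ∘ A = (A ∘ H) ∘ e`, the two products coincide, and
`A = e ∘ A ⊆ H ∘ A` then turns the quasi-hyperideal inclusion into an equality.
-/

open Set

def hmul {H : Type*} (op : H → H → Set H) (A B : Set H) : Set H :=
  ⋃ a ∈ A, ⋃ b ∈ B, op a b

section

variable {H : Type*} {op : H → H → Set H}

theorem mem_hmul {t : H} {A B : Set H} :
    t ∈ hmul op A B ↔ ∃ a ∈ A, ∃ b ∈ B, t ∈ op a b := by
  simp [hmul]

theorem hmul_mono {A A' B B' : Set H} (hA : A ⊆ A') (hB : B ⊆ B') :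
    hmul op A B ⊆ hmul op A' B' := by
  simp only [subset_def, mem_hmul]
  rintro t ⟨a, ha, b, hb, ht⟩
  exact ⟨a, hA ha, b, hB hb, ht⟩

theorem hmul_singleton_singleton (a b : H) : hmul op {a} {b} = op a b := by
  simp [hmul]

theorem mem_hmul_hmul {t : H} {A B C : Set H} :
    t ∈ hmul op (hmul op A B) C ↔ ∃ a ∈ A, ∃ b ∈ B, ∃ c ∈ C, t ∈ hmul op (op a b) {c} := by
  simp only [mem_hmul, mem_singleton_iff]
  aesop

def IsLeftInvertive (op : H → H → Set H) : Prop :=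
  ∀ x y z : H, hmul op (op x y) {z} = hmul op (op z y) {x}

def IsPureLeftIdentity (op : H → H → Set H) (e : H) : Prop :=
  ∀ a : H, op e a = {a}

def IsIntraRegular (op : H → H → Set H) : Prop :=
  ∀ a : H, ∃ x y : H, a ∈ hmul op (hmul op {x} (op a a)) {y}

theorem IsPureLeftIdentity.hmul_singleton_left {e : H} (he : IsPureLeftIdentity op e)
    (A : Set H) : hmul op {e} A = A := by
  ext t
  simp [mem_hmul, he _]

theorem IsPureLeftIdentity.subset_hmul_univ_left {e : H} (he : IsPureLeftIdentity op e)
    (A : Set H) : A ⊆ hmul op univ A := by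
  conv_lhs => rw [← he.hmul_singleton_left A]
  exact hmul_mono (subset_univ _) subset_rfl

namespace IsLeftInvertive

theorem hmul_hmul_swap (hLA : IsLeftInvertive op) (A B C : Set H) :
    hmul op (hmul op A B) C = hmul op (hmul op C B) A := by
  ext t
  simp only [mem_hmul_hmul]
  constructor
  · rintro ⟨a, ha, b, hb, c, hc, ht⟩
    exact ⟨c, hc, b, hb, a, ha, hLA a b c ▸ ht⟩
  · rintro ⟨c, hc, b, hb, a, ha, ht⟩
    exact ⟨a, ha, b, hb, c, hc, hLA c b a ▸ ht⟩

theorem hmul_hmul_hmul_comm (hLA : IsLeftInvertive op) (A B C D : Set H) :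
    hmul op (hmul op A B) (hmul op C D) = hmul op (hmul op A C) (hmul op B D) := by
  rw [hLA.hmul_hmul_swap A B, hLA.hmul_hmul_swap C D, hLA.hmul_hmul_swap _ C A]

theorem hmul_left_comm (hLA : IsLeftInvertive op) {e : H} (he : IsPureLeftIdentity op e)
    (A B C : Set H) : hmul op A (hmul op B C) = hmul op B (hmul op A C) := by
  conv_lhs => rw [← he.hmul_singleton_left A]
  rw [hLA.hmul_hmul_hmul_comm, he.hmul_singleton_left]

theorem hmul_hmul_hmul_paramedial (hLA : IsLeftInvertive op) {e : H}
    (he : IsPureLeftIdentity op e) (A B C D : Set H) :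
    hmul op (hmul op A B) (hmul op C D) = hmul op (hmul op D B) (hmul op C A) := by
  rw [hLA.hmul_hmul_hmul_comm]
  conv_lhs => rw [← he.hmul_singleton_left A]
  rw [hLA.hmul_hmul_swap {e} A C, hLA.hmul_hmul_hmul_comm, he.hmul_singleton_left,
    hLA.hmul_hmul_swap _ B D]

theorem op_subset_hmul_singleton_univ (hLA : IsLeftInvertive op) {e : H}
    (he : IsPureLeftIdentity op e) (hir : IsIntraRegular op) (h a : H) :
    op h a ⊆ hmul op {a} univ := by
  intro t ht
  obtain ⟨x, y, htxy⟩ := hir t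
  have htt : op t t ⊆ hmul op (hmul op {h} {a}) (hmul op {h} {a}) := by
    rw [← hmul_singleton_singleton (op := op) t t, hmul_singleton_singleton h a]
    exact hmul_mono (singleton_subset_iff.2 ht) (singleton_subset_iff.2 ht)
  suffices hmul op (hmul op {x} (op t t)) {y} ⊆ hmul op {a} univ from this htxy
  calc hmul op (hmul op {x} (op t t)) {y}
      ⊆ hmul op (hmul op {x} (hmul op (hmul op {h} {a}) (hmul op {h} {a}))) {y} :=
        hmul_mono (hmul_mono subset_rfl htt) subset_rfl
    _ = hmul op (hmul op (hmul op {a} {a}) (hmul op {x} (hmul op {h} {h}))) {y} := by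
        rw [hLA.hmul_hmul_hmul_paramedial he, hLA.hmul_left_comm he]
    _ = hmul op {a} (hmul op (hmul op {y} (hmul op {x} (hmul op {h} {h}))) {a}) := by
        rw [hLA.hmul_hmul_swap, hLA.hmul_left_comm he]
    _ ⊆ hmul op {a} univ := hmul_mono subset_rfl (subset_univ _)

theorem hmul_univ_subset_hmul_univ (hLA : IsLeftInvertive op) {e : H}
    (he : IsPureLeftIdentity op e) (hir : IsIntraRegular op) (A : Set H) :
    hmul op univ A ⊆ hmul op A univ := by
  simp only [subset_def, mem_hmul]
  rintro t ⟨h, -, a, ha, ht⟩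
  obtain ⟨a', rfl, b, -, ht'⟩ := mem_hmul.1 (hLA.op_subset_hmul_singleton_univ he hir h a ht)
  exact ⟨a', ha, b, mem_univ b, ht'⟩

theorem hmul_univ_comm (hLA : IsLeftInvertive op) {e : H} (he : IsPureLeftIdentity op e)
    (hir : IsIntraRegular op) (A : Set H) : hmul op univ A = hmul op A univ := by
  refine subset_antisymm (hLA.hmul_univ_subset_hmul_univ he hir A) ?_
  calc hmul op A univ = hmul op (hmul op univ A) {e} := by
        conv_lhs => rw [← he.hmul_singleton_left A, hLA.hmul_hmul_swap]
    _ ⊆ hmul op (hmul op A univ) {e} :=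
        hmul_mono (hLA.hmul_univ_subset_hmul_univ he hir A) subset_rfl
    _ = hmul op univ A := by
        conv_rhs => rw [← he.hmul_singleton_left univ, hLA.hmul_hmul_swap]

end IsLeftInvertive

end

theorem stmt17_general {H : Type*} (op : H → H → Set H)
    (hLA : ∀ x y z : H, hmul op (op x y) {z} = hmul op (op z y) {x})
    (e : H) (he : ∀ a : H, op e a = {a})
    (hir : ∀ a : H, ∃ x y : H, a ∈ hmul op (hmul op {x} (op a a)) {y}) :
    ∀ Q : Set H, Q.Nonempty →
      ((hmul op Set.univ Q ∩ hmul op Q Set.univ ⊆ Q) ↔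
        hmul op Set.univ Q ∩ hmul op Q Set.univ = Q) ∧
      ((hmul op Set.univ Q ∩ hmul op Q Set.univ ⊆ Q) →
        hmul op Set.univ Q = hmul op Q Set.univ) := by
  intro Q _
  have hcomm : hmul op univ Q = hmul op Q univ :=
    IsLeftInvertive.hmul_univ_comm hLA he hir Q
  have hsub : Q ⊆ hmul op univ Q := IsPureLeftIdentity.subset_hmul_univ_left he Q
  exact ⟨⟨fun hquasi => subset_antisymm hquasi (subset_inter hsub (hcomm ▸ hsub)),
    fun heq => heq.subset⟩, fun _ => hcomm⟩

theorem stmt17 {H : Type*} (op : H → H → Set H)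
    (hne : ∀ a b : H, (op a b).Nonempty)
    (hLA : ∀ x y z : H, hmul op (op x y) {z} = hmul op (op z y) {x})
    (e : H) (he : ∀ a : H, op e a = {a})
    (hir : ∀ a : H, ∃ x y : H, a ∈ hmul op (hmul op {x} (op a a)) {y}) :
    ∀ Q : Set H, Q.Nonempty →
      ((hmul op Set.univ Q ∩ hmul op Q Set.univ ⊆ Q) ↔
        hmul op Set.univ Q ∩ hmul op Q Set.univ = Q) ∧
      ((hmul op Set.univ Q ∩ hmul op Q Set.univ ⊆ Q) →
        hmul op Set.univ Q = hmul op Q Set.univ) :=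
  stmt17_general op hLA e he hir
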